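/- Let γ, σ² : [0,1] → ℝ be continuous with σ²(u) > 0 for all u ∈ [0,1] (condition (UE)), let Γ(u) := ∫₀^u γ(v) dv, g := ∫₀¹ γ(v) dv, assume (E1): Γ(u) − g·u > 0 for all u ∈ (0,1), let Ψ(u) := ∫_{1/2}^u σ²(v)/(2(Γ(v) − g·v)) dv and p_c := 2(g − γ(1))/σ²(1), and suppose p_c > 0. Then for every p with 0 ≤ p < p_c, the integration-by-parts identity ∫₀¹ exp(p·Ψ(u))·(γ(u) − g) du = −(p/2)·∫₀¹ exp(p·Ψ(u))·σ²(u) du holds; consequently, with b(u) := γ(u) + σ²(u)/2, G^p := ⟨b, Π̄^p⟩, and G_*^p := (1/2)·⟨σ², Π̄^p⟩, one has the reduction formula G^p = (1−p)·G_*^p + g. -/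

import Mathlib

/-! Write `F(u) = Γ(u) - g u`. Then `F(0) = F(1) = 0` and `Ψ' = σ² / (2F)`, so
`(exp(pΨ) F)' = exp(pΨ) (γ - g + p σ²/2)` on `(0,1)` and the identity is the fundamental theorem
of calculus once both boundary terms vanish. At `0` this holds because `Ψ ≤ 0` on `(0, 1/2]`.
At `1`, `F(u) / (1 - u) → g - γ(1)`, so for `p < q < p_c` the function `q Ψ(u) + log (1 - u)` is
eventually decreasing; hence `exp(pΨ(u)) = O((1 - u)^(-p/q))`, which is integrable and makes
`exp(pΨ) F = O((1 - u)^(1 - p/q))` tend to `0`. The reduction formula is then linear algebra in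
the three integrals `∫ exp(pΨ)`, `∫ exp(pΨ) (γ - g)` and `∫ exp(pΨ) σ²`. -/

open MeasureTheory Set Filter Topology

/-- `Γ(u) = ∫₀^u γ(v) dv`. -/
noncomputable def Gam (γ : ℝ → ℝ) (u : ℝ) : ℝ := ∫ v in (0:ℝ)..u, γ v

/-- market mean growth rate `g = ∫₀¹ γ(v) dv`. -/
noncomputable def mg (γ : ℝ → ℝ) : ℝ := ∫ v in (0:ℝ)..1, γ v

/-- `Ψ(u) = ∫_{1/2}^u σ²(v) / (2 (Γ(v) - g v)) dv`. -/
noncomputable def Psi (γ σ2 : ℝ → ℝ) (u : ℝ) : ℝ :=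
  ∫ v in (1/2:ℝ)..u, σ2 v / (2 * (Gam γ v - mg γ * v))

/-- critical diversity index `p_c = 2 (g - γ(1)) / σ²(1)`. -/
noncomputable def pcrit (γ σ2 : ℝ → ℝ) : ℝ := 2 * (mg γ - γ 1) / σ2 1

/-- critical index `q_c = 2 (γ(0) - g) / σ²(0)`. -/
noncomputable def qcrit (γ σ2 : ℝ → ℝ) : ℝ := 2 * (γ 0 - mg γ) / σ2 0

/-- `⟨f, Π̄^p⟩ = (∫₀¹ f(u) exp(p Ψ(u)) du) / (∫₀¹ exp(p Ψ(u)) du)`. -/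
noncomputable def bracket (γ σ2 f : ℝ → ℝ) (p : ℝ) : ℝ :=
  (∫ u in Set.Ioo (0:ℝ) 1, f u * Real.exp (p * Psi γ σ2 u)) /
    ∫ u in Set.Ioo (0:ℝ) 1, Real.exp (p * Psi γ σ2 u)

open Real

lemma integrableOn_one_sub_rpow_neg {θ : ℝ} (hθ : θ < 1) :
    IntegrableOn (fun u : ℝ => (1 - u) ^ (-θ)) (Ioo 0 1) := by
  have h := (intervalIntegral.intervalIntegrable_rpow' (a := 0) (b := 1)
    (show -1 < -θ by linarith)).comp_sub_left 1
  rw [sub_zero, sub_self] at h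
  rw [← intervalIntegrable_iff_integrableOn_Ioo_of_le zero_le_one]
  exact h.symm

lemma integrableOn_mul_of_norm_le_rpow {E f : ℝ → ℝ} {C θ : ℝ} (hθ : θ < 1)
    (hE : ContinuousOn E (Ioo 0 1)) (hEle : ∀ u ∈ Ioo (0:ℝ) 1, ‖E u‖ ≤ C * (1 - u) ^ (-θ))
    (hf : ContinuousOn f (Icc 0 1)) : IntegrableOn (fun u => E u * f u) (Ioo 0 1) := by
  obtain ⟨B, hB⟩ := isCompact_Icc.exists_bound_of_continuousOn hf
  refine ((integrableOn_one_sub_rpow_neg hθ).const_mul (C * B)).mono'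
    ((hE.mul (hf.mono Ioo_subset_Icc_self)).aestronglyMeasurable measurableSet_Ioo) ?_
  filter_upwards [ae_restrict_mem measurableSet_Ioo] with u hu
  calc ‖E u * f u‖ = ‖E u‖ * ‖f u‖ := norm_mul _ _
    _ ≤ C * (1 - u) ^ (-θ) * B := mul_le_mul (hEle u hu) (hB u (Ioo_subset_Icc_self hu))
        (norm_nonneg _) ((norm_nonneg _).trans (hEle u hu))
    _ = C * B * (1 - u) ^ (-θ) := by ring

lemma tendsto_mul_nhdsLT_one_of_norm_le_rpow {E F : ℝ → ℝ} {C θ r : ℝ} (hθ : θ < 1)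
    (hEle : ∀ u ∈ Ioo (0:ℝ) 1, ‖E u‖ ≤ C * (1 - u) ^ (-θ))
    (hF : Tendsto (fun v => F v / (1 - v)) (𝓝[<] 1) (𝓝 r)) :
    Tendsto (fun u => E u * F u) (𝓝[<] 1) (𝓝 0) := by
  have hpow : Tendsto (fun u : ℝ => (1 - u) ^ (1 - θ)) (𝓝[<] 1) (𝓝 0) := by
    have : ContinuousAt (fun u : ℝ => (1 - u) ^ (1 - θ)) 1 :=
      (continuousAt_const.sub continuousAt_id).rpow_const (Or.inr (by linarith))
    simpa [zero_rpow (by linarith : 1 - θ ≠ 0)] using this.tendsto.mono_left nhdsWithin_le_nhds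
  have hlim : Tendsto (fun u => C * ((1 - u) ^ (1 - θ) * ‖F u / (1 - u)‖)) (𝓝[<] 1) (𝓝 0) := by
    simpa using (hpow.mul hF.norm).const_mul C
  refine squeeze_zero_norm' ?_ hlim
  filter_upwards [Ioo_mem_nhdsLT zero_lt_one] with u hu
  have h1u : 0 < 1 - u := by linarith [hu.2]
  calc ‖E u * F u‖ = ‖E u‖ * ‖F u‖ := norm_mul _ _
    _ ≤ C * (1 - u) ^ (-θ) * ‖F u‖ := mul_le_mul_of_nonneg_right (hEle u hu) (norm_nonneg _)
    _ = C * ((1 - u) ^ (1 - θ) * ‖F u / (1 - u)‖) := by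
        rw [rpow_neg h1u.le, rpow_sub h1u, rpow_one, norm_div, Real.norm_of_nonneg h1u.le]
        field_simp

section
variable {γ σ2 : ℝ → ℝ}

lemma hasDerivWithinAt_Gam_sub_mg_mul (hγc : ContinuousOn γ (Icc 0 1)) {u : ℝ}
    (hu : u ∈ Icc (0:ℝ) 1) :
    HasDerivWithinAt (fun v => Gam γ v - mg γ * v) (γ u - mg γ) (Icc 0 1) u := by
  have : Fact (u ∈ Icc (0:ℝ) 1) := ⟨hu⟩
  have hint : IntervalIntegrable γ volume 0 u :=
    (hγc.mono (uIcc_subset_Icc (left_mem_Icc.2 zero_le_one) hu)).intervalIntegrable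
  have hGam : HasDerivWithinAt (Gam γ) (γ u) (Icc 0 1) u :=
    intervalIntegral.integral_hasDerivWithinAt_right hint
      (hγc.stronglyMeasurableAtFilter_nhdsWithin measurableSet_Icc u) (hγc u hu)
  have h := hGam.sub (((hasDerivAt_id u).const_mul (mg γ)).hasDerivWithinAt (s := Icc 0 1))
  rwa [mul_one] at h

lemma tendsto_Gam_sub_mg_mul_div_one_sub (hγc : ContinuousOn γ (Icc 0 1)) :
    Tendsto (fun v => (Gam γ v - mg γ * v) / (1 - v)) (𝓝[<] 1) (𝓝 (mg γ - γ 1)) := by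
  have h := (hasDerivWithinAt_Gam_sub_mg_mul hγc (right_mem_Icc.2 zero_le_one))
    |>.mono_of_mem_nhdsWithin (Icc_mem_nhdsLT zero_lt_one)
  rw [hasDerivWithinAt_iff_tendsto_slope' (by simp : (1:ℝ) ∉ Iio 1)] at h
  convert h.neg using 2 with v
  · simp only [slope_def_field, Gam, mg]
    rw [← neg_div_neg_eq]
    ring
  · ring

lemma continuousOn_Psi_integrand (hγc : ContinuousOn γ (Icc 0 1))
    (hσc : ContinuousOn σ2 (Icc 0 1)) (hE1 : ∀ u ∈ Ioo (0:ℝ) 1, 0 < Gam γ u - mg γ * u) :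
    ContinuousOn (fun v => σ2 v / (2 * (Gam γ v - mg γ * v))) (Ioo 0 1) :=
  (hσc.mono Ioo_subset_Icc_self).div (continuousOn_const.mul fun u hu =>
    (hasDerivWithinAt_Gam_sub_mg_mul hγc (Ioo_subset_Icc_self hu)).continuousWithinAt.mono
      Ioo_subset_Icc_self) fun u hu => by have := hE1 u hu; positivity

lemma hasDerivAt_Psi (hγc : ContinuousOn γ (Icc 0 1)) (hσc : ContinuousOn σ2 (Icc 0 1))
    (hE1 : ∀ u ∈ Ioo (0:ℝ) 1, 0 < Gam γ u - mg γ * u) {u : ℝ} (hu : u ∈ Ioo (0:ℝ) 1) :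
    HasDerivAt (Psi γ σ2) (σ2 u / (2 * (Gam γ u - mg γ * u))) u := by
  have hc := continuousOn_Psi_integrand hγc hσc hE1
  have hhalf : (1/2 : ℝ) ∈ Ioo (0:ℝ) 1 := by norm_num
  exact intervalIntegral.integral_hasDerivAt_right
    (hc.mono (ordConnected_Ioo.uIcc_subset hhalf hu)).intervalIntegrable
    (hc.stronglyMeasurableAtFilter isOpen_Ioo u hu) (hc.continuousAt (isOpen_Ioo.mem_nhds hu))

lemma monotoneOn_Psi (hγc : ContinuousOn γ (Icc 0 1)) (hσc : ContinuousOn σ2 (Icc 0 1))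
    (hσ : ∀ u ∈ Ioo (0:ℝ) 1, 0 ≤ σ2 u) (hE1 : ∀ u ∈ Ioo (0:ℝ) 1, 0 < Gam γ u - mg γ * u) :
    MonotoneOn (Psi γ σ2) (Ioo 0 1) := by
  refine monotoneOn_of_hasDerivWithinAt_nonneg (convex_Ioo 0 1)
    (f' := fun u => σ2 u / (2 * (Gam γ u - mg γ * u)))
    (fun u hu => (hasDerivAt_Psi hγc hσc hE1 hu).continuousAt.continuousWithinAt)
    (fun u hu => ?_) (fun u hu => ?_) <;> rw [interior_Ioo] at hu
  · exact (hasDerivAt_Psi hγc hσc hE1 hu).hasDerivWithinAt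
  · have := hσ u hu; have := hE1 u hu; positivity

lemma eventually_mul_lt_of_lt_pcrit (hγc : ContinuousOn γ (Icc 0 1))
    (hσc : ContinuousOn σ2 (Icc 0 1)) (hσ1 : 0 < σ2 1) {q : ℝ} (hq : q < pcrit γ σ2) :
    ∀ᶠ v in 𝓝[<] 1, q * σ2 v < 2 * ((Gam γ v - mg γ * v) / (1 - v)) := by
  have hσ : Tendsto σ2 (𝓝[<] 1) (𝓝 (σ2 1)) :=
    (hσc 1 (right_mem_Icc.2 zero_le_one)).mono_of_mem_nhdsWithin (Icc_mem_nhdsLT zero_lt_one)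
  refine (hσ.const_mul q).eventually_lt ((tendsto_Gam_sub_mg_mul_div_one_sub hγc).const_mul 2) ?_
  rw [pcrit, lt_div_iff₀ hσ1] at hq
  linarith

lemma exists_antitoneOn_mul_Psi_add_log (hγc : ContinuousOn γ (Icc 0 1))
    (hσc : ContinuousOn σ2 (Icc 0 1)) (hσ1 : 0 < σ2 1)
    (hE1 : ∀ u ∈ Ioo (0:ℝ) 1, 0 < Gam γ u - mg γ * u) {q : ℝ} (hq : q < pcrit γ σ2) :
    ∃ b ∈ Ioo (0:ℝ) 1, AntitoneOn (fun u => q * Psi γ σ2 u + log (1 - u)) (Ico b 1) := by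
  obtain ⟨c, hc1, hc⟩ :=
    mem_nhdsLT_iff_exists_Ioo_subset.1 (eventually_mul_lt_of_lt_pcrit hγc hσc hσ1 hq)
  obtain ⟨b, hcb, hb1⟩ := exists_between (max_lt (mem_Iio.1 hc1) zero_lt_one)
  have hsub : Ico b 1 ⊆ Ioo 0 1 ∩ Ioo c 1 := fun u hu =>
    ⟨⟨by linarith [le_max_right c 0, hu.1], hu.2⟩, ⟨by linarith [le_max_left c 0, hu.1], hu.2⟩⟩
  have hderiv : ∀ u ∈ Ioo (0:ℝ) 1, HasDerivAt (fun u => q * Psi γ σ2 u + log (1 - u))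
      (q * (σ2 u / (2 * (Gam γ u - mg γ * u))) + -1 / (1 - u)) u := fun u hu =>
    ((hasDerivAt_Psi hγc hσc hE1 hu).const_mul q).add
      (((hasDerivAt_id u).const_sub 1).log (sub_pos.2 hu.2).ne')
  refine ⟨b, ⟨by linarith [le_max_right c 0], hb1⟩,
    antitoneOn_of_hasDerivWithinAt_nonpos (convex_Ico b 1)
      (f' := fun u => q * (σ2 u / (2 * (Gam γ u - mg γ * u))) + -1 / (1 - u))
      (fun u hu => (hderiv u (hsub hu).1).continuousAt.continuousWithinAt)
      (fun u hu => ?_) (fun u hu => ?_)⟩ <;> rw [interior_Ico] at hu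
  · exact (hderiv u (hsub (Ioo_subset_Ico_self hu)).1).hasDerivWithinAt
  · obtain ⟨hu01, hucu⟩ := hsub (Ioo_subset_Ico_self hu)
    have h1u : 0 < 1 - u := by linarith [hu.2]
    have hF := hE1 u hu01
    have hlt : q * σ2 u < 2 * ((Gam γ u - mg γ * u) / (1 - u)) := hc hucu
    rw [mul_div_assoc', lt_div_iff₀ h1u] at hlt
    have : q * (σ2 u / (2 * (Gam γ u - mg γ * u))) ≤ 1 / (1 - u) := by
      rw [← mul_div_assoc, div_le_div_iff₀ (by positivity) h1u]
      linarith
    rw [neg_div]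
    linarith

lemma exists_norm_exp_mul_Psi_le_rpow (hγc : ContinuousOn γ (Icc 0 1))
    (hσc : ContinuousOn σ2 (Icc 0 1)) (hUE : ∀ u ∈ Icc (0:ℝ) 1, 0 < σ2 u)
    (hE1 : ∀ u ∈ Ioo (0:ℝ) 1, 0 < Gam γ u - mg γ * u) {p : ℝ} (hp0 : 0 ≤ p)
    (hp : p < pcrit γ σ2) :
    ∃ C θ : ℝ, θ < 1 ∧ ∀ u ∈ Ioo (0:ℝ) 1, ‖exp (p * Psi γ σ2 u)‖ ≤ C * (1 - u) ^ (-θ) := by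
  obtain ⟨q, hpq, hqc⟩ := exists_between hp
  have hq0 : 0 < q := hp0.trans_lt hpq
  obtain ⟨b, hb, hanti⟩ := exists_antitoneOn_mul_Psi_add_log hγc hσc
    (hUE 1 (right_mem_Icc.2 zero_le_one)) hE1 hqc
  set θ := p / q
  have hθ0 : 0 ≤ θ := div_nonneg hp0 hq0.le
  have hθq : θ * q = p := div_mul_cancel₀ p hq0.ne'
  have hlog : ∀ v ∈ Ioo (0:ℝ) 1, θ * log (1 - v) ≤ 0 := fun v hv =>
    mul_nonpos_of_nonneg_of_nonpos hθ0 (log_nonpos (by linarith [hv.2]) (by linarith [hv.1]))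
  refine ⟨exp (p * Psi γ σ2 b), θ, (div_lt_one hq0).2 hpq, fun u hu => ?_⟩
  have key : p * Psi γ σ2 u + θ * log (1 - u) ≤ p * Psi γ σ2 b := by
    rcases le_total u b with hub | hbu
    · have := monotoneOn_Psi hγc hσc (fun v hv => (hUE v (Ioo_subset_Icc_self hv)).le) hE1
        hu hb hub
      linarith [mul_le_mul_of_nonneg_left this hp0, hlog u hu]
    · calc p * Psi γ σ2 u + θ * log (1 - u) = θ * (q * Psi γ σ2 u + log (1 - u)) := by
            rw [← hθq]; ring
        _ ≤ θ * (q * Psi γ σ2 b + log (1 - b)) :=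
            mul_le_mul_of_nonneg_left (hanti ⟨le_rfl, hb.2⟩ ⟨hbu, hu.2⟩ hbu) hθ0
        _ = p * Psi γ σ2 b + θ * log (1 - b) := by rw [← hθq]; ring
        _ ≤ p * Psi γ σ2 b := by linarith [hlog b hb]
  have h1u : 0 < 1 - u := by linarith [hu.2]
  rw [Real.norm_of_nonneg (exp_pos _).le]
  calc exp (p * Psi γ σ2 u) = exp (p * Psi γ σ2 u + θ * log (1 - u)) * (1 - u) ^ (-θ) := by
        rw [rpow_def_of_pos h1u, ← exp_add]; ring_nf
    _ ≤ exp (p * Psi γ σ2 b) * (1 - u) ^ (-θ) :=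
        mul_le_mul_of_nonneg_right (exp_le_exp.2 key) (rpow_nonneg h1u.le _)

lemma integrableOn_exp_mul_Psi_mul (hγc : ContinuousOn γ (Icc 0 1))
    (hσc : ContinuousOn σ2 (Icc 0 1)) (hUE : ∀ u ∈ Icc (0:ℝ) 1, 0 < σ2 u)
    (hE1 : ∀ u ∈ Ioo (0:ℝ) 1, 0 < Gam γ u - mg γ * u) {p : ℝ} (hp0 : 0 ≤ p)
    (hp : p < pcrit γ σ2) {f : ℝ → ℝ} (hf : ContinuousOn f (Icc 0 1)) :
    IntegrableOn (fun u => exp (p * Psi γ σ2 u) * f u) (Ioo 0 1) :=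
  let ⟨_, _, hθ, hle⟩ := exists_norm_exp_mul_Psi_le_rpow hγc hσc hUE hE1 hp0 hp
  integrableOn_mul_of_norm_le_rpow hθ
    (fun _ hu => ((hasDerivAt_Psi hγc hσc hE1 hu).const_mul p).exp.continuousAt.continuousWithinAt)
    hle hf

lemma tendsto_exp_mul_Psi_mul_nhdsGT_zero (hγc : ContinuousOn γ (Icc 0 1))
    (hσc : ContinuousOn σ2 (Icc 0 1)) (hσ : ∀ u ∈ Ioo (0:ℝ) 1, 0 ≤ σ2 u)
    (hE1 : ∀ u ∈ Ioo (0:ℝ) 1, 0 < Gam γ u - mg γ * u) {p : ℝ} (hp0 : 0 ≤ p) :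
    Tendsto (fun u => exp (p * Psi γ σ2 u) * (Gam γ u - mg γ * u)) (𝓝[>] 0) (𝓝 0) := by
  have hF : Tendsto (fun u => Gam γ u - mg γ * u) (𝓝[>] 0) (𝓝 0) := by
    have := ((hasDerivWithinAt_Gam_sub_mg_mul hγc (left_mem_Icc.2 zero_le_one)).continuousWithinAt
      |>.mono_of_mem_nhdsWithin (Icc_mem_nhdsGT zero_lt_one)).tendsto
    simpa [Gam] using this
  refine squeeze_zero_norm' ?_ (by simpa using hF.norm)
  filter_upwards [Ioc_mem_nhdsGT (by norm_num : (0:ℝ) < 1/2)] with u hu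
  have hΨ := monotoneOn_Psi hγc hσc hσ hE1 ⟨hu.1, by linarith [hu.2]⟩ (by norm_num) hu.2
  rw [show Psi γ σ2 (1/2) = 0 from intervalIntegral.integral_same] at hΨ
  rw [norm_mul, Real.norm_of_nonneg (exp_pos _).le]
  exact mul_le_of_le_one_left (norm_nonneg _)
    (exp_le_one_iff.2 (mul_nonpos_of_nonneg_of_nonpos hp0 hΨ))

lemma hasDerivAt_exp_mul_Psi_mul (hγc : ContinuousOn γ (Icc 0 1))
    (hσc : ContinuousOn σ2 (Icc 0 1)) (hE1 : ∀ u ∈ Ioo (0:ℝ) 1, 0 < Gam γ u - mg γ * u)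
    (p : ℝ) {u : ℝ} (hu : u ∈ Ioo (0:ℝ) 1) :
    HasDerivAt (fun v => exp (p * Psi γ σ2 v) * (Gam γ v - mg γ * v))
      (exp (p * Psi γ σ2 u) * (γ u - mg γ + p * σ2 u / 2)) u := by
  have h := ((hasDerivAt_Psi hγc hσc hE1 hu).const_mul p).exp.mul
    ((hasDerivWithinAt_Gam_sub_mg_mul hγc (Ioo_subset_Icc_self hu)).hasDerivAt
      (Icc_mem_nhds hu.1 hu.2))
  refine h.congr_deriv ?_
  have hdiv : σ2 u / (2 * (Gam γ u - mg γ * u)) * (Gam γ u - mg γ * u) = σ2 u / 2 := by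
    rw [div_mul_eq_mul_div, mul_div_mul_right _ _ (hE1 u hu).ne']
  linear_combination (exp (p * Psi γ σ2 u) * p) * hdiv

lemma integral_exp_mul_Psi_mul_eq_zero (hγc : ContinuousOn γ (Icc 0 1))
    (hσc : ContinuousOn σ2 (Icc 0 1)) (hUE : ∀ u ∈ Icc (0:ℝ) 1, 0 < σ2 u)
    (hE1 : ∀ u ∈ Ioo (0:ℝ) 1, 0 < Gam γ u - mg γ * u) {p : ℝ} (hp0 : 0 ≤ p)
    (hp : p < pcrit γ σ2) :
    ∫ u in Ioo (0:ℝ) 1, exp (p * Psi γ σ2 u) * (γ u - mg γ + p * σ2 u / 2) = 0 := by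
  obtain ⟨C, θ, hθ, hle⟩ := exists_norm_exp_mul_Psi_le_rpow hγc hσc hUE hE1 hp0 hp
  have hint : IntegrableOn (fun u => exp (p * Psi γ σ2 u) * (γ u - mg γ + p * σ2 u / 2))
      (Ioo 0 1) := integrableOn_exp_mul_Psi_mul hγc hσc hUE hE1 hp0 hp (by fun_prop)
  rw [← integral_Ioc_eq_integral_Ioo, ← intervalIntegral.integral_of_le zero_le_one,
    intervalIntegral.integral_eq_sub_of_hasDerivAt_of_tendsto zero_lt_one
      (fun u hu => hasDerivAt_exp_mul_Psi_mul hγc hσc hE1 p hu)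
      ((intervalIntegrable_iff_integrableOn_Ioo_of_le zero_le_one).2 hint)
      (tendsto_exp_mul_Psi_mul_nhdsGT_zero hγc hσc
        (fun u hu => (hUE u (Ioo_subset_Icc_self hu)).le) hE1 hp0)
      (tendsto_mul_nhdsLT_one_of_norm_le_rpow hθ hle (tendsto_Gam_sub_mg_mul_div_one_sub hγc)),
    sub_zero]

lemma integral_exp_mul_Psi_mul_sub_mg (hγc : ContinuousOn γ (Icc 0 1))
    (hσc : ContinuousOn σ2 (Icc 0 1)) (hUE : ∀ u ∈ Icc (0:ℝ) 1, 0 < σ2 u)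
    (hE1 : ∀ u ∈ Ioo (0:ℝ) 1, 0 < Gam γ u - mg γ * u) {p : ℝ} (hp0 : 0 ≤ p)
    (hp : p < pcrit γ σ2) :
    ∫ u in Ioo (0:ℝ) 1, exp (p * Psi γ σ2 u) * (γ u - mg γ) =
      -(p / 2) * ∫ u in Ioo (0:ℝ) 1, exp (p * Psi γ σ2 u) * σ2 u := by
  have h := integral_exp_mul_Psi_mul_eq_zero hγc hσc hUE hE1 hp0 hp
  have hsplit : (fun u => exp (p * Psi γ σ2 u) * (γ u - mg γ + p * σ2 u / 2)) =
      fun u => exp (p * Psi γ σ2 u) * (γ u - mg γ) + p / 2 * (exp (p * Psi γ σ2 u) * σ2 u) := by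
    ext u; ring
  rw [hsplit, integral_add (integrableOn_exp_mul_Psi_mul hγc hσc hUE hE1 hp0 hp (by fun_prop))
    ((integrableOn_exp_mul_Psi_mul hγc hσc hUE hE1 hp0 hp hσc).const_mul _),
    integral_const_mul] at h
  linarith

lemma bracket_rateOfReturn_eq {p : ℝ}
    (hE : IntegrableOn (fun u => exp (p * Psi γ σ2 u)) (Ioo 0 1))
    (hA : IntegrableOn (fun u => exp (p * Psi γ σ2 u) * (γ u - mg γ)) (Ioo 0 1))
    (hS : IntegrableOn (fun u => exp (p * Psi γ σ2 u) * σ2 u) (Ioo 0 1))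
    (hibp : ∫ u in Ioo (0:ℝ) 1, exp (p * Psi γ σ2 u) * (γ u - mg γ) =
      -(p / 2) * ∫ u in Ioo (0:ℝ) 1, exp (p * Psi γ σ2 u) * σ2 u) :
    bracket γ σ2 (fun u => γ u + σ2 u / 2) p = (1 - p) * ((1/2) * bracket γ σ2 σ2 p) + mg γ := by
  have hZ : 0 < ∫ u in Ioo (0:ℝ) 1, exp (p * Psi γ σ2 u) := by
    have : NeZero (volume.restrict (Ioo (0:ℝ) 1)) := ⟨by simp⟩
    exact integral_exp_pos hE
  have hAS : IntegrableOn (fun u => exp (p * Psi γ σ2 u) * (γ u - mg γ) +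
      1 / 2 * (exp (p * Psi γ σ2 u) * σ2 u)) (Ioo 0 1) := hA.add (hS.const_mul _)
  have hsplit : (fun u => (γ u + σ2 u / 2) * exp (p * Psi γ σ2 u)) = fun u =>
      exp (p * Psi γ σ2 u) * (γ u - mg γ) + 1 / 2 * (exp (p * Psi γ σ2 u) * σ2 u) +
        mg γ * exp (p * Psi γ σ2 u) := by
    ext u; ring
  have hσ : ∫ u in Ioo (0:ℝ) 1, σ2 u * exp (p * Psi γ σ2 u) =
      ∫ u in Ioo (0:ℝ) 1, exp (p * Psi γ σ2 u) * σ2 u := by simp_rw [mul_comm]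
  rw [bracket, bracket, hsplit, integral_add hAS (hE.const_mul _),
    integral_add hA (hS.const_mul _), integral_const_mul, integral_const_mul, hσ, hibp]
  field_simp
  ring

end

theorem stmt14_general (γ σ2 : ℝ → ℝ) (hγc : ContinuousOn γ (Set.Icc 0 1))
    (hσc : ContinuousOn σ2 (Set.Icc 0 1)) (hUE : ∀ u ∈ Set.Icc (0:ℝ) 1, 0 < σ2 u)
    (hE1 : ∀ u ∈ Set.Ioo (0:ℝ) 1, 0 < Gam γ u - mg γ * u)
    (p : ℝ) (hp0 : 0 ≤ p) (hp : p < pcrit γ σ2) :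
    (∫ u in Set.Ioo (0:ℝ) 1, Real.exp (p * Psi γ σ2 u) * (γ u - mg γ)) =
        -(p / 2) * ∫ u in Set.Ioo (0:ℝ) 1, Real.exp (p * Psi γ σ2 u) * σ2 u ∧
      bracket γ σ2 (fun u => γ u + σ2 u / 2) p =
        (1 - p) * ((1/2) * bracket γ σ2 σ2 p) + mg γ := by
  have hint {f : ℝ → ℝ} (hf : ContinuousOn f (Icc 0 1)) :
      IntegrableOn (fun u => exp (p * Psi γ σ2 u) * f u) (Ioo 0 1) :=
    integrableOn_exp_mul_Psi_mul hγc hσc hUE hE1 hp0 hp hf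
  have hibp := integral_exp_mul_Psi_mul_sub_mg hγc hσc hUE hE1 hp0 hp
  refine ⟨hibp, bracket_rateOfReturn_eq ?_ (hint (by fun_prop)) (hint hσc) hibp⟩
  simpa using hint (f := fun _ => 1) continuousOn_const

/-- under (UE), (E1) and 0 ≤ p < p_c, the integration-by-parts identity
∫₀¹ exp(p Ψ(u)) (γ(u) - g) du = -(p/2) ∫₀¹ exp(p Ψ(u)) σ²(u) du holds, and the
reduction formula G^p = (1-p) G_*^p + g follows, where G^p = ⟨b, Π̄^p⟩ with
b = γ + σ²/2 and G_*^p = (1/2) ⟨σ², Π̄^p⟩. -/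
theorem stmt14 (γ σ2 : ℝ → ℝ) (hγc : ContinuousOn γ (Set.Icc 0 1))
    (hσc : ContinuousOn σ2 (Set.Icc 0 1)) (hUE : ∀ u ∈ Set.Icc (0:ℝ) 1, 0 < σ2 u)
    (hE1 : ∀ u ∈ Set.Ioo (0:ℝ) 1, 0 < Gam γ u - mg γ * u)
    (hpc : 0 < pcrit γ σ2)
    (p : ℝ) (hp0 : 0 ≤ p) (hp : p < pcrit γ σ2) :
    (∫ u in Set.Ioo (0:ℝ) 1, Real.exp (p * Psi γ σ2 u) * (γ u - mg γ)) =
        -(p / 2) * ∫ u in Set.Ioo (0:ℝ) 1, Real.exp (p * Psi γ σ2 u) * σ2 u ∧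
      bracket γ σ2 (fun u => γ u + σ2 u / 2) p =
        (1 - p) * ((1/2) * bracket γ σ2 σ2 p) + mg γ :=
  stmt14_general γ σ2 hγc hσc hUE hE1 p hp0 hp
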